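/- arXiv:1303.4220 — 3 statements merged into one kernel-verified Lean document; each statement's English description precedes it below -/
import Mathlib

section
/- Let K be a field of characteristic ≠ 2 and A ∈ K. For all t, y ∈ K with t⁴ ≠ 1 and y² = A(t+1)⁴(t²+1)⁴ - 64t³(t²+t+1)³, setting u = -t(t³-1)/(t⁴-1) and v = y/(8(t+1)²(t²+1)²), we have v² = u⁴ + u³ + A/64. -/
/-!
Since `t³ - 1 = (t - 1)(t² + t + 1)` and `t⁴ - 1 = (t - 1)(t + 1)(t² + 1)`, the coordinate
`u = -t(t³-1)/(t⁴-1)` equals `-t(t²+t+1)/w` with `w = (t+1)(t²+1) = t³+t²+t+1`, so that `u + 1 = 1/w`.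
Hence `u⁴ + u³ = u³(u + 1) = -t³(t²+t+1)³/w⁴`, and dividing the equation of the hyperelliptic
curve by `64 w⁴` gives `v² = A/64 - t³(t²+t+1)³/w⁴ = u⁴ + u³ + A/64`.
-/

namespace CoveringMap

variable {K : Type*} [Field K] {t : K}

lemma add_one_mul_sq_add_one_ne_zero (ht : t ^ 4 ≠ 1) : (t + 1) * (t ^ 2 + 1) ≠ 0 := by
  have h : (t - 1) * ((t + 1) * (t ^ 2 + 1)) ≠ 0 := by
    rw [show (t - 1) * ((t + 1) * (t ^ 2 + 1)) = t ^ 4 - 1 by ring]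
    exact sub_ne_zero.mpr ht
  exact right_ne_zero_of_mul h

lemma div_pow_four_sub_one_eq (ht : t ^ 4 ≠ 1) :
    -t * (t ^ 3 - 1) / (t ^ 4 - 1) = -t * (t ^ 2 + t + 1) / ((t + 1) * (t ^ 2 + 1)) := by
  rw [div_eq_div_iff (sub_ne_zero.mpr ht) (add_one_mul_sq_add_one_ne_zero ht)]
  ring

lemma neg_mul_div_add_one_eq (ht : t ^ 4 ≠ 1) :
    -t * (t ^ 2 + t + 1) / ((t + 1) * (t ^ 2 + 1)) + 1 = 1 / ((t + 1) * (t ^ 2 + 1)) := by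
  rw [div_add_one (add_one_mul_sq_add_one_ne_zero ht)]
  ring

lemma pow_four_add_pow_three_eq (ht : t ^ 4 ≠ 1) :
    (-t * (t ^ 3 - 1) / (t ^ 4 - 1)) ^ 4 + (-t * (t ^ 3 - 1) / (t ^ 4 - 1)) ^ 3
      = -(t ^ 3 * (t ^ 2 + t + 1) ^ 3) / ((t + 1) ^ 4 * (t ^ 2 + 1) ^ 4) := by
  have factor (u : K) : u ^ 4 + u ^ 3 = u ^ 3 * (u + 1) := by ring
  rw [div_pow_four_sub_one_eq ht, factor, neg_mul_div_add_one_eq ht]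
  field_simp

end CoveringMap

open CoveringMap in
/-- Second covering map `f₂`: for a field `K` of characteristic ≠ 2, `A ∈ K`, and all
`t, y ∈ K` with `t⁴ ≠ 1` and `y² = A(t+1)⁴(t²+1)⁴ - 64t³(t²+t+1)³`, setting
`u = -t(t³-1)/(t⁴-1)` and `v = y/(8(t+1)²(t²+1)²)`, one has `v² = u⁴ + u³ + A/64`. -/
theorem stmt_7 {K : Type*} [Field K] (h2 : (2 : K) ≠ 0) (A : K) :
    ∀ t y : K, t ^ 4 ≠ 1 →
      y ^ 2 = A * (t + 1) ^ 4 * (t ^ 2 + 1) ^ 4 - 64 * t ^ 3 * (t ^ 2 + t + 1) ^ 3 →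
      (y / (8 * (t + 1) ^ 2 * (t ^ 2 + 1) ^ 2)) ^ 2
        = (-t * (t ^ 3 - 1) / (t ^ 4 - 1)) ^ 4 + (-t * (t ^ 3 - 1) / (t ^ 4 - 1)) ^ 3
          + A / 64 := by
  intro t y ht hy
  obtain ⟨h1, hsq⟩ := mul_ne_zero_iff.mp (add_one_mul_sq_add_one_ne_zero ht)
  have h8 : (8 : K) ≠ 0 := by simpa [show (8 : K) = 2 ^ 3 by norm_num] using h2
  have h64 : (64 : K) ≠ 0 := by simpa [show (64 : K) = 8 ^ 2 by norm_num] using h8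
  rw [pow_four_add_pow_three_eq ht]
  field_simp
  linear_combination 64 * hy
end

section
/- Let K be a field of characteristic ≠ 2 and A ∈ K. For all t ∈ K with t⁴ ≠ 1: setting u₁ = -(t³-1)/(t⁴-1) and u₂ = -t(t³-1)/(t⁴-1), we have u₁⁴ + u₁³ = u₂⁴ + u₂³. In other words, the two covering maps of the hyperelliptic curve have the same underlying right-hand-side value, so the same y-coordinate works for both. -/
/-- For a field `K` of characteristic ≠ 2 and `t ∈ K` with `t⁴ ≠ 1`, setting
`u₁ = -(t³-1)/(t⁴-1)` and `u₂ = -t(t³-1)/(t⁴-1)`, one has `u₁⁴ + u₁³ = u₂⁴ + u₂³`. -/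
theorem stmt_8 {K : Type*} [Field K] (h2 : (2 : K) ≠ 0) :
    ∀ t : K, t ^ 4 ≠ 1 →
      (-(t ^ 3 - 1) / (t ^ 4 - 1)) ^ 4 + (-(t ^ 3 - 1) / (t ^ 4 - 1)) ^ 3
        = (-t * (t ^ 3 - 1) / (t ^ 4 - 1)) ^ 4 + (-t * (t ^ 3 - 1) / (t ^ 4 - 1)) ^ 3 := by
  intro t ht
  have h : t ^ 4 - 1 ≠ 0 := sub_ne_zero.mpr ht
  field_simp
  ring
end

section
/- Let K be a field of characteristic ≠ 2 and A ∈ K, A ≠ 0. Suppose 4A ≠ 27 and char K ≠ 3. Then the polynomial q(t) = A(t+1)⁴(t²+1)⁴ - 64t³(t²+t+1)³ ∈ K[t] has degree 12 and is separable (has no repeated roots in an algebraic closure of K), hence y² = q(t) defines a hyperelliptic curve of genus 5. -/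
set_option maxHeartbeats 4000000 in
open Polynomial in
/-- For a field `K` of characteristic ≠ 2, 3 and `A ∈ K` with `A ≠ 0` and `4A ≠ 27`,
the polynomial `q(t) = A(t+1)⁴(t²+1)⁴ - 64t³(t²+t+1)³ ∈ K[t]` has degree 12 and is
separable (no repeated roots in an algebraic closure), hence `y² = q(t)` defines a
hyperelliptic curve of genus 5. -/
theorem stmt_17 {K : Type*} [Field K] (h2 : (2 : K) ≠ 0) (h3 : (3 : K) ≠ 0)
    (A : K) (hA : A ≠ 0) (hA' : 4 * A ≠ 27) :
    let q : K[X] := C A * (X + 1) ^ 4 * (X ^ 2 + 1) ^ 4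
      - C 64 * X ^ 3 * (X ^ 2 + X + 1) ^ 3
    q.degree = 12 ∧ q.Separable := by
  intro q
  have hc : ((4096 : K) * A * (4 * A - 27)) ≠ 0 := by
    have h4096 : (4096 : K) ≠ 0 := by
      have : (4096 : K) = 2 ^ 12 := by norm_num
      rw [this]; exact pow_ne_zero _ h2
    have h27 : (4 * A - 27 : K) ≠ 0 := sub_ne_zero.mpr hA'
    exact mul_ne_zero (mul_ne_zero h4096 hA) h27
  have hQ : q = C A * (X + 1) ^ 4 * (X ^ 2 + 1) ^ 4
      - C 64 * X ^ 3 * (X ^ 2 + X + 1) ^ 3 := rfl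
  constructor
  · rw [hQ]
    compute_degree!
    all_goals simp_all
  · have hd : derivative q =
      (12*C A)*X^11 + (44*C A)*X^10 + (100*C A)*X^9 + (180*C A - 576)*X^8
      + (248*C A - 1536)*X^7 + (280*C A - 2688)*X^6 + (264*C A - 2688)*X^5
      + (200*C A - 1920)*X^4 + (124*C A - 768)*X^3 + (60*C A - 192)*X^2
      + (20*C A)*X + (4*C A) := by
      rw [hQ]
      simp only [derivative_sub, derivative_mul, derivative_pow, derivative_C,
        derivative_X, derivative_add, derivative_one, derivative_X_pow, derivative_ofNat,
        Nat.cast_ofNat, map_ofNat]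
      ring
    have key :
      ((2640*C A^2 - 67584*C A)*X^10 + (6452*C A^2 - 243968*C A)*X^9
      + (11436*C A^2 - 529152*C A)*X^8 + (17592*C A^2 - 1049856*C A + 3244032)*X^7
      + (17912*C A^2 - 1412288*C A + 8466432)*X^6 + (15888*C A^2 - 1557120*C A + 13688832)*X^5
      + (11520*C A^2 - 1230912*C A + 12423168)*X^4 + (5384*C A^2 - 875648*C A + 7495680)*X^3
      + (2424*C A^2 - 445632*C A + 2273280)*X^2 + (636*C A^2 - 251136*C A + 294912)*X
      + (276*C A^2 - 36608*C A - 110592)) * q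
      + ((-220*C A^2 + 5632*C A)*X^11 + (-611*C A^2 + 22208*C A)*X^10
      + (-1230*C A^2 + 53376*C A)*X^9 + (-2153*C A^2 + 118080*C A - 360448)*X^8
      + (-2604*C A^2 + 181696*C A - 1060864)*X^7 + (-2782*C A^2 + 233792*C A - 1994752)*X^6
      + (-2520*C A^2 + 223424*C A - 2158592)*X^5 + (-1618*C A^2 + 189504*C A - 1630208)*X^4
      + (-1016*C A^2 + 122944*C A - 659456)*X^3 + (-447*C A^2 + 86272*C A - 135168)*X^2
      + (-90*C A^2 + 33152*C A + 36864)*X + (-69*C A^2 + 13248*C A)) * derivative q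
      = C ((4096 : K) * A * (4 * A - 27)) := by
      rw [hd, hQ]
      simp only [map_mul, map_sub, map_ofNat]
      ring
    rw [Polynomial.separable_def]
    refine ⟨C ((4096 : K) * A * (4 * A - 27))⁻¹ *
      ((2640*C A^2 - 67584*C A)*X^10 + (6452*C A^2 - 243968*C A)*X^9
      + (11436*C A^2 - 529152*C A)*X^8 + (17592*C A^2 - 1049856*C A + 3244032)*X^7
      + (17912*C A^2 - 1412288*C A + 8466432)*X^6 + (15888*C A^2 - 1557120*C A + 13688832)*X^5
      + (11520*C A^2 - 1230912*C A + 12423168)*X^4 + (5384*C A^2 - 875648*C A + 7495680)*X^3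
      + (2424*C A^2 - 445632*C A + 2273280)*X^2 + (636*C A^2 - 251136*C A + 294912)*X
      + (276*C A^2 - 36608*C A - 110592)),
      C ((4096 : K) * A * (4 * A - 27))⁻¹ *
      ((-220*C A^2 + 5632*C A)*X^11 + (-611*C A^2 + 22208*C A)*X^10
      + (-1230*C A^2 + 53376*C A)*X^9 + (-2153*C A^2 + 118080*C A - 360448)*X^8
      + (-2604*C A^2 + 181696*C A - 1060864)*X^7 + (-2782*C A^2 + 233792*C A - 1994752)*X^6
      + (-2520*C A^2 + 223424*C A - 2158592)*X^5 + (-1618*C A^2 + 189504*C A - 1630208)*X^4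
      + (-1016*C A^2 + 122944*C A - 659456)*X^3 + (-447*C A^2 + 86272*C A - 135168)*X^2
      + (-90*C A^2 + 33152*C A + 36864)*X + (-69*C A^2 + 13248*C A)), ?_⟩
    have e1 : C ((4096 : K) * A * (4 * A - 27))⁻¹ * C ((4096 : K) * A * (4 * A - 27))
        = (1 : K[X]) := by
      rw [← C_mul, inv_mul_cancel₀ hc, C_1]
    linear_combination C ((4096 : K) * A * (4 * A - 27))⁻¹ * key + e1
end
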